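/- Let (P, W) be a PW-pair of real n×n matrices such that the matrix PWP is positive semidefinite, let z* ∈ ℝⁿ, and let s̄ ∈ ℝⁿ satisfy W s̄ = −P z*. Then s̄ is a global minimizer of the quadratic program: for every s in the range of P one has ½⟨s̄, W s̄⟩ + ⟨z*, s̄⟩ ≤ ½⟨s, W s⟩ + ⟨z*, s⟩. -/

import Mathlib

/-!
Since `W (I - P) = I - P` and both matrices are symmetric, `(I - P) W = I - P`, so applying
`I - P` to `W s̄ = -P z*` shows that `s̄` lies in `range P`. For `s` in `range P` write
`s = s̄ + d` with `d = P q`. The objective changes by `⟨d, W s̄ + z*⟩ + ½⟨d, W d⟩`; the linear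
term is `⟨P q, (I - P) z*⟩ = 0`, and the quadratic term is `⟨q, P W P q⟩ ≥ 0`.
-/

open Matrix

def IsPWPair {n : ℕ} (P W : Matrix (Fin n) (Fin n) ℝ) : Prop :=
  P.IsSymm ∧ W.IsSymm ∧ P * P = P ∧ W * (1 - P) = 1 - P

namespace Matrix

variable {ι R : Type*} [Fintype ι] [CommSemiring R]

theorem IsSymm.dotProduct_mulVec_comm {A : Matrix ι ι R} (hA : A.IsSymm) (u v : ι → R) :
    u ⬝ᵥ (A *ᵥ v) = v ⬝ᵥ (A *ᵥ u) := by
  rw [dotProduct_mulVec, ← mulVec_transpose, hA.eq, dotProduct_comm]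

theorem IsSymm.mulVec_dotProduct_mulVec {P : Matrix ι ι R} (hP : P.IsSymm) (W : Matrix ι ι R)
    (q : ι → R) : (P *ᵥ q) ⬝ᵥ (W *ᵥ (P *ᵥ q)) = q ⬝ᵥ ((P * W * P) *ᵥ q) := by
  rw [dotProduct_comm, hP.dotProduct_mulVec_comm, mulVec_mulVec, mulVec_mulVec]

theorem IsSymm.mulVec_dotProduct_sub_mulVec {S : Type*} [CommRing S] {P : Matrix ι ι S}
    (hP : P.IsSymm) (hP2 : P * P = P) (u v : ι → S) : (P *ᵥ u) ⬝ᵥ (v - P *ᵥ v) = 0 := by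
  rw [dotProduct_comm, hP.dotProduct_mulVec_comm, mulVec_sub, mulVec_mulVec, hP2, sub_self,
    dotProduct_zero]

end Matrix

section QuadraticForm

variable {ι : Type*} [Fintype ι]

theorem quadratic_add_of_isSymm {W : Matrix ι ι ℝ} (hW : W.IsSymm) (z s d : ι → ℝ) :
    (1 / 2) * ((s + d) ⬝ᵥ (W *ᵥ (s + d))) + z ⬝ᵥ (s + d) =
      (1 / 2) * (s ⬝ᵥ (W *ᵥ s)) + z ⬝ᵥ s + d ⬝ᵥ (W *ᵥ s + z) + (1 / 2) * (d ⬝ᵥ (W *ᵥ d)) := by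
  simp only [mulVec_add, dotProduct_add, add_dotProduct, hW.dotProduct_mulVec_comm s d,
    dotProduct_comm z d]
  ring

theorem quadratic_le_add_of_isSymm {W : Matrix ι ι ℝ} (hW : W.IsSymm) {z s d : ι → ℝ}
    (hlin : d ⬝ᵥ (W *ᵥ s + z) = 0) (hquad : 0 ≤ d ⬝ᵥ (W *ᵥ d)) :
    (1 / 2) * (s ⬝ᵥ (W *ᵥ s)) + z ⬝ᵥ s ≤
      (1 / 2) * ((s + d) ⬝ᵥ (W *ᵥ (s + d))) + z ⬝ᵥ (s + d) := by
  rw [quadratic_add_of_isSymm hW, hlin]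
  linarith

end QuadraticForm

namespace IsPWPair

variable {n : ℕ} {P W : Matrix (Fin n) (Fin n) ℝ}

theorem one_sub_mul (h : IsPWPair P W) : (1 - P) * W = 1 - P := by
  obtain ⟨hP, hW, -, hW1P⟩ := h
  simpa [transpose_mul, transpose_sub, hP.eq, hW.eq] using congrArg transpose hW1P

theorem mulVec_eq_self_of_mulVec_eq (h : IsPWPair P W) {s y : Fin n → ℝ}
    (hs : W *ᵥ s = P *ᵥ y) : P *ᵥ s = s := by
  have hcompl : (1 - P) *ᵥ s = 0 := by
    rw [← h.one_sub_mul, ← mulVec_mulVec, hs, mulVec_mulVec, Matrix.sub_mul, Matrix.one_mul,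
      h.2.2.1, sub_self, zero_mulVec]
  rwa [sub_mulVec, one_mulVec, sub_eq_zero, eq_comm] at hcompl

end IsPWPair

theorem stmt_8_general (n : ℕ)
    (P W : Matrix (Fin n) (Fin n) ℝ) (hPW : IsPWPair P W)
    (hpsd : ∀ z : Fin n → ℝ, 0 ≤ z ⬝ᵥ ((P * W * P) *ᵥ z))
    (zstar sbar : Fin n → ℝ)
    (hs : W *ᵥ sbar = -(P *ᵥ zstar)) :
    ∀ s : Fin n → ℝ, (∃ p : Fin n → ℝ, s = P *ᵥ p) →
      (1 / 2) * (sbar ⬝ᵥ (W *ᵥ sbar)) + zstar ⬝ᵥ sbar ≤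
        (1 / 2) * (s ⬝ᵥ (W *ᵥ s)) + zstar ⬝ᵥ s := by
  rintro s ⟨p, rfl⟩
  have hsbar : P *ᵥ sbar = sbar :=
    hPW.mulVec_eq_self_of_mulVec_eq (y := -zstar) (by rw [hs, mulVec_neg])
  obtain ⟨hP, hW, hP2, -⟩ := hPW
  have hsplit : P *ᵥ p = sbar + P *ᵥ (p - sbar) := by
    rw [mulVec_sub, hsbar, add_sub_cancel]
  rw [hsplit]
  refine quadratic_le_add_of_isSymm hW ?_ ?_
  · rw [hs, neg_add_eq_sub]
    exact hP.mulVec_dotProduct_sub_mulVec hP2 _ _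
  · rw [hP.mulVec_dotProduct_mulVec]
    exact hpsd _

/-- **Global optimality of stationary points under semidefiniteness.**
If `(P,W)` is a PW-pair with `PWP` positive semidefinite and `W s̄ = −P z*`, then `s̄`
globally minimizes `s ↦ ½⟨s, Ws⟩ + ⟨z*, s⟩` over the range of `P`. -/
theorem stmt_8 (n : ℕ) (hn : 1 ≤ n)
    (P W : Matrix (Fin n) (Fin n) ℝ) (hPW : IsPWPair P W)
    (hpsd : ∀ z : Fin n → ℝ, 0 ≤ z ⬝ᵥ ((P * W * P) *ᵥ z))
    (zstar sbar : Fin n → ℝ)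
    (hs : W *ᵥ sbar = -(P *ᵥ zstar)) :
    ∀ s : Fin n → ℝ, (∃ p : Fin n → ℝ, s = P *ᵥ p) →
      (1 / 2) * (sbar ⬝ᵥ (W *ᵥ sbar)) + zstar ⬝ᵥ sbar ≤
        (1 / 2) * (s ⬝ᵥ (W *ᵥ s)) + zstar ⬝ᵥ s :=
  stmt_8_general n P W hPW hpsd zstar sbar hs
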